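/- arXiv:2311.05385 — 2 statements merged into one kernel-verified Lean document; each statement's English description precedes it below -/
import Mathlib

section
/- Let c > 0 and let B : [0,1) → ℝ be continuous with B(0) = 1, differentiable on (0,1) with Ḃ(η) ≤ 0 and 1 − η ≤ B(η) ≤ 1 for all η ∈ (0,1), and satisfying Ḃ(η) = c²·(1 − η − B(η))/(g(η)·h(B(η))·f(η,B(η))) for all η ∈ (0,1). Then lim_{η→0⁺} Ḃ(η) = −1; in particular B has right derivative −1 at 0. -/
open MeasureTheory Filter Set Topology

noncomputable section

/-- Assumptions (A1)-(A3) on the reaction `f` and the diffusivities `g`, `h`. -/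
structure Assumptions (f : ℝ → ℝ → ℝ) (g h : ℝ → ℝ) (L1 L2 Mg : ℝ) : Prop where
  L1_pos : 0 < L1
  L1_le_L2 : L1 ≤ L2
  f_C1 : ContDiffOn ℝ 1 (fun p : ℝ × ℝ => f p.1 p.2) (Icc 0 1 ×ˢ Icc 0 1)
  f_nonneg : ∀ s ∈ Icc (0:ℝ) 1, ∀ r ∈ Icc (0:ℝ) 1, 0 ≤ f s r
  f_zero_iff : ∀ s ∈ Icc (0:ℝ) 1, ∀ r ∈ Icc (0:ℝ) 1, (f s r = 0 ↔ s = 0 ∨ r = 0)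
  f_lower : ∀ s ∈ Ioo (0:ℝ) 1, ∀ r ∈ Ioo (0:ℝ) 1, L1 * (s * r) ≤ f s r
  f_upper : ∀ s ∈ Ioo (0:ℝ) 1, ∀ r ∈ Ioo (0:ℝ) 1, f s r ≤ L2 * (s * r)
  g_C1 : ContDiffOn ℝ 1 g (Icc 0 1)
  g_nonneg : ∀ s ∈ Icc (0:ℝ) 1, 0 ≤ g s
  g_zero_iff : ∀ s ∈ Icc (0:ℝ) 1, (g s = 0 ↔ s = 0)
  g_deriv0_pos : 0 < derivWithin g (Icc 0 1) 0
  Mg_pos : 0 < Mg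
  g_lower : ∀ s₁ s : ℝ, 0 ≤ s₁ → s₁ ≤ s → s ≤ 1 → Mg * g s₁ ≤ g s
  h_C1 : ContDiffOn ℝ 1 h (Icc 0 1)
  h_nonneg : ∀ r ∈ Icc (0:ℝ) 1, 0 ≤ h r
  h_zero_iff : ∀ r ∈ Icc (0:ℝ) 1, (h r = 0 ↔ r = 0)
  h_deriv0_pos : 0 < derivWithin h (Icc 0 1) 0

/-- A traveling wave of system (1) with speed `c`: profile `(η, β)` with values in `[0,1]`,
`η` of class `C¹` solving `c·η' = f(η,β)` and `β` continuous, a.e. differentiable,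
with `h(β)·β' ∈ L¹_loc` solving the second equation weakly. -/
structure IsTravelingWave (f : ℝ → ℝ → ℝ) (g h : ℝ → ℝ) (c : ℝ) (η β : ℝ → ℝ) : Prop where
  eta_mem : ∀ ξ : ℝ, η ξ ∈ Icc (0:ℝ) 1
  beta_mem : ∀ ξ : ℝ, β ξ ∈ Icc (0:ℝ) 1
  eta_C1 : ContDiff ℝ 1 η
  eta_eq : ∀ ξ : ℝ, c * deriv η ξ = f (η ξ) (β ξ)
  beta_cont : Continuous β
  beta_diff_ae : ∀ᵐ ξ ∂(volume : Measure ℝ), DifferentiableAt ℝ β ξ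
  beta_loc_int : LocallyIntegrable (fun ξ : ℝ => h (β ξ) * deriv β ξ) volume
  weak_eq : ∀ ψ : ℝ → ℝ, ContDiff ℝ (⊤ : ℕ∞) ψ → HasCompactSupport ψ →
    (∫ ξ : ℝ, ((g (η ξ) * h (β ξ) * deriv β ξ + c * β ξ) * deriv ψ ξ
       - f (η ξ) (β ξ) * ψ ξ)) = 0

/-- Boundary condition at `-∞`: `(η,β) → (0,1)`. -/
def BCneg (η β : ℝ → ℝ) : Prop := Tendsto η atBot (𝓝 0) ∧ Tendsto β atBot (𝓝 1)

/-- Boundary condition at `+∞`: `(η,β) → (1,0)`. -/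
def BCpos (η β : ℝ → ℝ) : Prop := Tendsto η atTop (𝓝 1) ∧ Tendsto β atTop (𝓝 0)

/-- A traveling wave is classical if `β` is twice continuously differentiable on `ℝ`. -/
def IsClassicalWave (β : ℝ → ℝ) : Prop := ContDiff ℝ 2 β

/-- A traveling wave is sharp at `l` if `β` attains `l` at some `ξl`, is `C²` away from `ξl`
and is not differentiable at `ξl`. -/
def IsSharpAt (β : ℝ → ℝ) (l : ℝ) : Prop :=
  ∃ ξl : ℝ, β ξl = l ∧ ContDiffOn ℝ 2 β ({ξl}ᶜ) ∧ ¬ DifferentiableAt ℝ β ξl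

/-- A wavefront: a traveling wave satisfying the boundary conditions whose components are
non-constant monotone functions. -/
def IsWavefront (f : ℝ → ℝ → ℝ) (g h : ℝ → ℝ) (c : ℝ) (η β : ℝ → ℝ) : Prop :=
  IsTravelingWave f g h c η β ∧ BCneg η β ∧ BCpos η β ∧
  Monotone η ∧ Antitone β ∧ (∃ a b : ℝ, η a ≠ η b) ∧ (∃ a b : ℝ, β a ≠ β b)

/-- The lower threshold estimate `c_♯`. -/
def cSharp (g h : ℝ → ℝ) (L1 Mg : ℝ) : ℝ :=
  max (Real.sqrt (L1 * Mg * ∫ r in (0:ℝ)..1, g (1 - r) * h r * r))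
      (Real.sqrt (2 * L1 * Mg * ∫ r in (0:ℝ)..1, (1 - r) * g (1 - r) * h r * r))

/-- The upper threshold estimate `c_*`. -/
def cStar (g h : ℝ → ℝ) (L2 : ℝ) : ℝ :=
  2 * Real.sqrt (L2 * sSup (g '' Icc 0 1) * sSup ((fun r => h r / r) '' Ioc 0 1))

/-!
Write `u(η) = B(η) - (1 - η)` and `D(η) = g(η) h(B(η)) f(η, B(η))`, so that the equation reads
`u' = 1 - c² u / D` with `u(0) = 0`. By (A1)–(A3), `D(η) ~ d η²` as `η → 0⁺`, where
`d = g'(0) h(1) ∂ₛf(0,1) > 0` (`∂ₛf(0,1) ≥ L1` because `f(s, 1 - s) ≥ L1 s (1 - s)`).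
Comparing `u` with the barriers `γ η²` shows `u(η) ~ (d / c²) η²`: where `u` lies above a barrier
with `γ > d / c²` it decreases, and where it lies below one with `γ < d / c²` it grows faster
than the barrier near `0`. Hence `Ḃ = -c² u / D → -1`, and since `B` is continuous at `0` this
limit is also its right derivative there.
-/

lemma nonpos_of_hasDerivAt_neg_of_nonneg {w w' : ℝ → ℝ} {b : ℝ} (hb : 0 ≤ b)
    (hw : ContinuousOn w (Icc 0 b)) (hw0 : w 0 ≤ 0)
    (hder : ∀ x ∈ Ioo 0 b, HasDerivAt w (w' x) x)
    (hneg : ∀ x ∈ Ioo 0 b, 0 ≤ w x → w' x < 0) :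
    w b ≤ 0 := by
  by_contra! hwb
  set S := Icc 0 b ∩ w ⁻¹' Iic 0
  have hS : IsCompact S := isCompact_Icc.of_isClosed_subset
    (hw.preimage_isClosed_of_isClosed isClosed_Icc isClosed_Iic) inter_subset_left
  have hmS : sSup S ∈ S := hS.sSup_mem ⟨0, ⟨le_rfl, hb⟩, hw0⟩
  obtain ⟨⟨hm0, hmb⟩, hwm⟩ := hmS
  replace hwm : w (sSup S) ≤ 0 := hwm
  have hmb : sSup S < b := hmb.lt_of_ne fun h => (h ▸ hwm).not_gt hwb
  -- `w > 0` after the last point `sSup S` where `w ≤ 0`, so the mean value theorem applies there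
  obtain ⟨θ, hθ, hslope⟩ := exists_hasDerivAt_eq_slope w w' hmb
    (hw.mono (Icc_subset_Icc hm0 le_rfl)) fun x hx => hder x ⟨hm0.trans_lt hx.1, hx.2⟩
  have hwθ : 0 < w θ := by
    by_contra! hθS
    exact hθ.1.not_ge (le_csSup hS.bddAbove ⟨⟨hm0.trans hθ.1.le, hθ.2.le⟩, hθS⟩)
  have := hneg θ ⟨hm0.trans_lt hθ.1, hθ.2⟩ hwθ.le
  rw [hslope, div_neg_iff] at this
  rcases this with ⟨-, hbm⟩ | ⟨hwbm, -⟩ <;> linarith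

section OneSubDiv

variable {u k : ℝ → ℝ} {b : ℝ}

lemma eventually_le_mul_sq_of_hasDerivAt (hb : 0 < b) (hu : ContinuousOn u (Ico 0 b))
    (hu0 : u 0 = 0) (hk : ∀ x ∈ Ioo 0 b, 0 < k x)
    (hder : ∀ x ∈ Ioo 0 b, HasDerivAt u (1 - u x / k x) x) {γ γ' : ℝ} (hγ : 0 < γ)
    (hγγ' : γ < γ') (hkγ : ∀ᶠ x in 𝓝[>] 0, k x ≤ γ * x ^ 2) :
    ∀ᶠ x in 𝓝[>] 0, u x ≤ γ' * x ^ 2 := by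
  obtain ⟨b', hb', hkγ'⟩ := mem_nhdsGT_iff_exists_Ioo_subset.mp hkγ
  filter_upwards [Ioo_mem_nhdsGT (lt_min hb' hb)] with x₁ hx₁
  have hx₁b : x₁ < b := hx₁.2.trans_le (min_le_right _ _)
  have := nonpos_of_hasDerivAt_neg_of_nonneg (w := fun y => u y - γ' * y ^ 2)
    (w' := fun y => 1 - u y / k y - γ' * (2 * y)) hx₁.1.le
    ((hu.mono fun y hy => ⟨hy.1, hy.2.trans_lt hx₁b⟩).sub (by fun_prop)) (by simp [hu0])
    (fun y hy => ((hder y ⟨hy.1, hy.2.trans hx₁b⟩).sub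
      ((hasDerivAt_pow 2 y).const_mul γ')).congr_deriv (by ring))
    (fun y hy hwy => by
      have hyb : y < b := hy.2.trans hx₁b
      have hky : k y ≤ γ * y ^ 2 := hkγ' ⟨hy.1, hy.2.trans (hx₁.2.trans_le (min_le_left _ _))⟩
      -- above the barrier `u > k`, so `u` is decreasing
      have hku : k y < u y := by nlinarith [pow_pos hy.1 2]
      have hratio := (one_lt_div (hk y ⟨hy.1, hyb⟩)).2 hku
      nlinarith [hy.1])
  linarith

lemma eventually_mul_sq_le_of_hasDerivAt (hb : 0 < b) (hu : ContinuousOn u (Ico 0 b))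
    (hu0 : u 0 = 0) (hder : ∀ x ∈ Ioo 0 b, HasDerivAt u (1 - u x / k x) x) {γ γ' : ℝ}
    (hγ' : 0 < γ') (hγ'γ : γ' < γ) (hkγ : ∀ᶠ x in 𝓝[>] 0, γ * x ^ 2 ≤ k x) :
    ∀ᶠ x in 𝓝[>] 0, γ' * x ^ 2 ≤ u x := by
  obtain ⟨b', hb', hkγ'⟩ := mem_nhdsGT_iff_exists_Ioo_subset.mp hkγ
  have hγ : 0 < γ := hγ'.trans hγ'γ
  -- below the barrier `u' ≥ 1 - γ' / γ`, which beats the barrier's slope `2 γ' x` for small `x`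
  set δ := (1 - γ' / γ) / (2 * γ')
  have hδ : 0 < δ := div_pos (sub_pos.2 ((div_lt_one hγ).2 hγ'γ)) (by positivity)
  filter_upwards [Ioo_mem_nhdsGT (lt_min (lt_min hb' hb) hδ)] with x₁ hx₁
  obtain ⟨hx₁b', hx₁b, hx₁δ⟩ : x₁ < b' ∧ x₁ < b ∧ x₁ < δ := by
    simpa only [lt_min_iff, and_assoc] using hx₁.2
  have := nonpos_of_hasDerivAt_neg_of_nonneg (w := fun y => γ' * y ^ 2 - u y)
    (w' := fun y => γ' * (2 * y) - (1 - u y / k y)) hx₁.1.le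
    ((continuousOn_const.mul (continuousOn_pow 2)).sub
      (hu.mono fun y hy => ⟨hy.1, hy.2.trans_lt hx₁b⟩)) (by simp [hu0])
    (fun y hy => (((hasDerivAt_pow 2 y).const_mul γ').sub
      (hder y ⟨hy.1, hy.2.trans hx₁b⟩)).congr_deriv (by ring))
    (fun y hy hwy => by
      have hky : γ * y ^ 2 ≤ k y := hkγ' ⟨hy.1, hy.2.trans hx₁b'⟩
      have hk : 0 < k y := (mul_pos hγ (pow_pos hy.1 2)).trans_le hky
      have hratio : u y / k y ≤ γ' / γ := by
        rw [div_le_div_iff₀ hk hγ]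
        nlinarith
      have hyδ : 2 * γ' * y < 1 - γ' / γ := by
        have := hy.2.trans hx₁δ
        rwa [lt_div_iff₀ (by positivity), mul_comm] at this
      linarith)
  linarith

theorem tendsto_div_sq_of_hasDerivAt_one_sub_div (hb : 0 < b) (hu : ContinuousOn u (Ico 0 b))
    (hu0 : u 0 = 0) (hk : ∀ x ∈ Ioo 0 b, 0 < k x)
    (hder : ∀ x ∈ Ioo 0 b, HasDerivAt u (1 - u x / k x) x) {a : ℝ} (ha : 0 < a)
    (hka : Tendsto (fun x => k x / x ^ 2) (𝓝[>] 0) (𝓝 a)) :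
    Tendsto (fun x => u x / x ^ 2) (𝓝[>] 0) (𝓝 a) := by
  rw [tendsto_order] at hka ⊢
  refine ⟨fun a' ha' => ?_, fun a' ha' => ?_⟩
  · obtain ⟨γ', hγ', hγ'a⟩ := exists_between (max_lt ha' ha)
    obtain ⟨γ, hγ'γ, hγa⟩ := exists_between hγ'a
    have hkγ : ∀ᶠ x in 𝓝[>] 0, γ * x ^ 2 ≤ k x := by
      filter_upwards [hka.1 γ hγa, self_mem_nhdsWithin] with x hx hx0
      exact ((lt_div_iff₀ (pow_pos hx0 2)).1 hx).le
    filter_upwards [eventually_mul_sq_le_of_hasDerivAt hb hu hu0 hder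
      ((le_max_right _ _).trans_lt hγ') hγ'γ hkγ, self_mem_nhdsWithin] with x hx hx0
    exact (le_max_left _ _).trans_lt hγ' |>.trans_le ((le_div_iff₀ (pow_pos hx0 2)).2 hx)
  · obtain ⟨γ, haγ, hγa'⟩ := exists_between ha'
    obtain ⟨γ', hγγ', hγ'a'⟩ := exists_between hγa'
    have hkγ : ∀ᶠ x in 𝓝[>] 0, k x ≤ γ * x ^ 2 := by
      filter_upwards [hka.2 γ haγ, self_mem_nhdsWithin] with x hx hx0
      exact ((div_lt_iff₀ (pow_pos hx0 2)).1 hx).le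
    filter_upwards [eventually_le_mul_sq_of_hasDerivAt hb hu hu0 hk hder
      (ha.trans haγ) hγγ' hkγ, self_mem_nhdsWithin] with x hx hx0
    exact ((div_le_iff₀ (pow_pos hx0 2)).2 hx).trans_lt hγ'a'

end OneSubDiv

/-- `∂ₛf(s, r)`, one-sided on the boundary of the unit square. -/
def partialFst (f : ℝ → ℝ → ℝ) (s r : ℝ) : ℝ :=
  fderivWithin ℝ (fun p : ℝ × ℝ => f p.1 p.2) (Icc 0 1 ×ˢ Icc 0 1) (s, r) (1, 0)

section PartialFst

variable {f : ℝ → ℝ → ℝ}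

lemma hasDerivAt_partialFst
    (hf : ContDiffOn ℝ 1 (fun p : ℝ × ℝ => f p.1 p.2) (Icc 0 1 ×ˢ Icc 0 1))
    {s r : ℝ} (hs : s ∈ Ioo (0:ℝ) 1) (hr : r ∈ Icc (0:ℝ) 1) :
    HasDerivAt (fun t => f t r) (partialFst f s r) s := by
  have hF := ((hf.differentiableOn one_ne_zero) (s, r)
    (mk_mem_prod (Ioo_subset_Icc_self hs) hr)).hasFDerivWithinAt
  have hslice : HasDerivWithinAt (fun t : ℝ => (t, r)) ((1 : ℝ), (0 : ℝ)) (Ioo 0 1) s :=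
    ((hasDerivAt_id s).prodMk (hasDerivAt_const s r)).hasDerivWithinAt
  exact (hF.comp_hasDerivWithinAt s hslice
    fun t ht => mk_mem_prod (Ioo_subset_Icc_self ht) hr).hasDerivAt
    (Ioo_mem_nhds hs.1 hs.2)

lemma exists_eq_partialFst_mul
    (hf : ContDiffOn ℝ 1 (fun p : ℝ × ℝ => f p.1 p.2) (Icc 0 1 ×ˢ Icc 0 1))
    (hf0 : ∀ r ∈ Icc (0:ℝ) 1, f 0 r = 0) {x r : ℝ} (hx : x ∈ Ioo (0:ℝ) 1)
    (hr : r ∈ Icc (0:ℝ) 1) :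
    ∃ θ ∈ Ioo 0 x, f x r = partialFst f θ r * x := by
  have hcont : ContinuousOn (fun t => f t r) (Icc 0 x) :=
    hf.continuousOn.comp (f := fun t => (t, r)) (by fun_prop)
      fun t ht => mk_mem_prod ⟨ht.1, ht.2.trans hx.2.le⟩ hr
  obtain ⟨θ, hθ, hslope⟩ := exists_hasDerivAt_eq_slope (fun t => f t r)
    (fun t => partialFst f t r) hx.1 hcont
    fun t ht => hasDerivAt_partialFst hf ⟨ht.1, ht.2.trans hx.2⟩ hr
  refine ⟨θ, hθ, ?_⟩
  rw [hslope, hf0 r hr, sub_zero, sub_zero, div_mul_cancel₀ _ hx.1.ne']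

lemma continuousOn_partialFst
    (hf : ContDiffOn ℝ 1 (fun p : ℝ × ℝ => f p.1 p.2) (Icc 0 1 ×ˢ Icc 0 1)) :
    ContinuousOn (fun p : ℝ × ℝ => partialFst f p.1 p.2) (Icc 0 1 ×ˢ Icc 0 1) :=
  (ContinuousLinearMap.apply ℝ ℝ ((1 : ℝ), (0 : ℝ))).continuous.comp_continuousOn
    (hf.continuousOn_fderivWithin
      ((uniqueDiffOn_Icc zero_lt_one).prod (uniqueDiffOn_Icc zero_lt_one)) le_rfl)

lemma tendsto_div_partialFst
    (hf : ContDiffOn ℝ 1 (fun p : ℝ × ℝ => f p.1 p.2) (Icc 0 1 ×ˢ Icc 0 1))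
    (hf0 : ∀ r ∈ Icc (0:ℝ) 1, f 0 r = 0) {R : ℝ → ℝ} {r₀ : ℝ} (hr₀ : r₀ ∈ Icc (0:ℝ) 1)
    (hRmem : ∀ x ∈ Ioo (0:ℝ) 1, R x ∈ Icc (0:ℝ) 1) (hR : Tendsto R (𝓝[>] 0) (𝓝 r₀)) :
    Tendsto (fun x => f x (R x) / x) (𝓝[>] 0) (𝓝 (partialFst f 0 r₀)) := by
  choose! Θ hΘ hfΘ using fun x (hx : x ∈ Ioo (0:ℝ) 1) =>
    exists_eq_partialFst_mul hf hf0 hx (hRmem x hx)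
  have hI : Ioo (0:ℝ) 1 ∈ 𝓝[>] 0 := Ioo_mem_nhdsGT one_pos
  have hΘ0 : Tendsto Θ (𝓝[>] 0) (𝓝 0) :=
    tendsto_of_tendsto_of_tendsto_of_le_of_le' tendsto_const_nhds
      (tendsto_id.mono_left nhdsWithin_le_nhds)
      (by filter_upwards [hI] with x hx using (hΘ x hx).1.le)
      (by filter_upwards [hI] with x hx using (hΘ x hx).2.le)
  have hpair : Tendsto (fun x => (Θ x, R x)) (𝓝[>] 0) (𝓝[Icc 0 1 ×ˢ Icc 0 1] (0, r₀)) :=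
    tendsto_nhdsWithin_iff.2 ⟨hΘ0.prodMk_nhds hR, by
      filter_upwards [hI] with x hx
      exact ⟨⟨(hΘ x hx).1.le, ((hΘ x hx).2.trans hx.2).le⟩, hRmem x hx⟩⟩
  refine ((continuousOn_partialFst hf (0, r₀) ⟨⟨le_rfl, zero_le_one⟩, hr₀⟩).tendsto.comp
    hpair).congr' ?_
  filter_upwards [hI] with x hx
  simp only [Function.comp_apply, hfΘ x hx, mul_div_cancel_right₀ _ hx.1.ne']

end PartialFst

lemma tendsto_div_of_hasDerivWithinAt_Icc {g : ℝ → ℝ} {g' : ℝ} (hg : HasDerivWithinAt g g' (Icc 0 1) 0)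
    (hg0 : g 0 = 0) : Tendsto (fun x => g x / x) (𝓝[>] 0) (𝓝 g') := by
  have := (hasDerivWithinAt_iff_tendsto_slope' (s := Ioo 0 1) (lt_irrefl 0 ·.1)).1
    (hg.mono Ioo_subset_Icc_self)
  rw [nhdsWithin_Ioo_eq_nhdsGT one_pos] at this
  refine this.congr fun x => ?_
  rw [slope_def_field, hg0, sub_zero, sub_zero]

namespace Assumptions

variable {f : ℝ → ℝ → ℝ} {g h : ℝ → ℝ} {L1 L2 Mg : ℝ} (A : Assumptions f g h L1 L2 Mg)
include A

lemma g_pos {s : ℝ} (hs : s ∈ Ioc (0:ℝ) 1) : 0 < g s :=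
  (A.g_nonneg s (Ioc_subset_Icc_self hs)).lt_of_ne'
    fun h0 => hs.1.ne' ((A.g_zero_iff s (Ioc_subset_Icc_self hs)).1 h0)

lemma h_pos {r : ℝ} (hr : r ∈ Ioc (0:ℝ) 1) : 0 < h r :=
  (A.h_nonneg r (Ioc_subset_Icc_self hr)).lt_of_ne'
    fun h0 => hr.1.ne' ((A.h_zero_iff r (Ioc_subset_Icc_self hr)).1 h0)

lemma f_pos {s r : ℝ} (hs : s ∈ Ioc (0:ℝ) 1) (hr : r ∈ Ioc (0:ℝ) 1) : 0 < f s r :=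
  (A.f_nonneg s (Ioc_subset_Icc_self hs) r (Ioc_subset_Icc_self hr)).lt_of_ne' fun h0 =>
    ((A.f_zero_iff s (Ioc_subset_Icc_self hs) r (Ioc_subset_Icc_self hr)).1 h0).elim
      hs.1.ne' hr.1.ne'

lemma f_zero : ∀ r ∈ Icc (0:ℝ) 1, f 0 r = 0 := fun r hr =>
  (A.f_zero_iff 0 ⟨le_rfl, zero_le_one⟩ r hr).2 (Or.inl rfl)

lemma L1_le_partialFst : L1 ≤ partialFst f 0 1 := by
  have hlim := tendsto_div_partialFst A.f_C1 A.f_zero ⟨zero_le_one, le_rfl⟩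
    (R := fun x => 1 - x) (fun x hx => ⟨by linarith [hx.2], by linarith [hx.1]⟩)
    ((continuous_const.sub continuous_id).tendsto' 0 1 (sub_zero 1) |>.mono_left
      nhdsWithin_le_nhds)
  have hL1 : Tendsto (fun x : ℝ => L1 * (1 - x)) (𝓝[>] 0) (𝓝 L1) :=
    ((continuous_const.mul (continuous_const.sub continuous_id)).tendsto' 0 L1
      (by simp)).mono_left nhdsWithin_le_nhds
  refine le_of_tendsto_of_tendsto hL1 hlim ?_
  filter_upwards [Ioo_mem_nhdsGT one_pos] with x hx
  rw [le_div_iff₀ hx.1]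
  nlinarith [A.f_lower x hx (1 - x) ⟨by linarith [hx.2], by linarith [hx.1]⟩]

lemma tendsto_denominator_div_sq {R : ℝ → ℝ} (hRmem : ∀ x ∈ Ioo (0:ℝ) 1, R x ∈ Icc (0:ℝ) 1)
    (hR : Tendsto R (𝓝[>] 0) (𝓝 1)) :
    Tendsto (fun x => g x * h (R x) * f x (R x) / x ^ 2) (𝓝[>] 0)
      (𝓝 (derivWithin g (Icc 0 1) 0 * h 1 * partialFst f 0 1)) := by
  have hg := tendsto_div_of_hasDerivWithinAt_Icc
    ((A.g_C1.differentiableOn one_ne_zero 0 ⟨le_rfl, zero_le_one⟩).hasDerivWithinAt)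
    ((A.g_zero_iff 0 ⟨le_rfl, zero_le_one⟩).2 rfl)
  have hh : Tendsto (fun x => h (R x)) (𝓝[>] 0) (𝓝 (h 1)) :=
    (A.h_C1.continuousOn.continuousWithinAt ⟨zero_le_one, le_rfl⟩).tendsto.comp
      (tendsto_nhdsWithin_iff.2 ⟨hR, mem_of_superset (Ioo_mem_nhdsGT one_pos) hRmem⟩)
  have hf := tendsto_div_partialFst A.f_C1 A.f_zero ⟨zero_le_one, le_rfl⟩ hRmem hR
  refine ((hg.mul hh).mul hf).congr' ?_
  filter_upwards [self_mem_nhdsWithin] with x (hx : 0 < x)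
  field_simp

lemma denominator_limit_pos : 0 < derivWithin g (Icc 0 1) 0 * h 1 * partialFst f 0 1 :=
  mul_pos (mul_pos A.g_deriv0_pos (A.h_pos ⟨zero_lt_one, le_rfl⟩))
    (A.L1_pos.trans_le A.L1_le_partialFst)

end Assumptions

theorem statement14_general
    (f : ℝ → ℝ → ℝ) (g h : ℝ → ℝ) (L1 L2 Mg : ℝ)
    (A : Assumptions f g h L1 L2 Mg)
    (c : ℝ) (hc : 0 < c)
    (B : ℝ → ℝ) (hBcont : ContinuousOn B (Ico 0 1)) (hB0 : B 0 = 1)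
    (hODE : ∀ x ∈ Ioo (0:ℝ) 1,
      HasDerivAt B (c ^ 2 * (1 - x - B x) / (g x * h (B x) * f x (B x))) x)
    (hBbd : ∀ x ∈ Ioo (0:ℝ) 1, 1 - x ≤ B x ∧ B x ≤ 1) :
    Tendsto (deriv B) (nhdsWithin 0 (Ioi 0)) (𝓝 (-1)) ∧
    HasDerivWithinAt B (-1) (Ici 0) 0 := by
  set D : ℝ → ℝ := fun x => g x * h (B x) * f x (B x)
  replace hODE : ∀ x ∈ Ioo (0:ℝ) 1, HasDerivAt B (c ^ 2 * (1 - x - B x) / D x) x := hODE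
  set d := derivWithin g (Icc 0 1) 0 * h 1 * partialFst f 0 1
  have hdc : 0 < d / c ^ 2 := div_pos A.denominator_limit_pos (by positivity)
  have hBmem : ∀ x ∈ Ioo (0:ℝ) 1, B x ∈ Ioc (0:ℝ) 1 := fun x hx =>
    ⟨by linarith [(hBbd x hx).1, hx.2], (hBbd x hx).2⟩
  have hD : ∀ x ∈ Ioo (0:ℝ) 1, 0 < D x := fun x hx =>
    mul_pos (mul_pos (A.g_pos (Ioo_subset_Ioc_self hx)) (A.h_pos (hBmem x hx)))
      (A.f_pos (Ioo_subset_Ioc_self hx) (hBmem x hx))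
  have hBc : ContinuousWithinAt B (Ioo 0 1) 0 :=
    (hBcont 0 ⟨le_rfl, one_pos⟩).mono Ioo_subset_Ico_self
  have hB : Tendsto B (𝓝[>] 0) (𝓝 1) := by
    simpa [hB0, nhdsWithin_Ioo_eq_nhdsGT one_pos] using hBc.tendsto
  have hDd : Tendsto (fun x => D x / x ^ 2) (𝓝[>] 0) (𝓝 d) :=
    A.tendsto_denominator_div_sq (fun x hx => Ioc_subset_Icc_self (hBmem x hx)) hB
  have hu : Tendsto (fun x => (B x - (1 - x)) / x ^ 2) (𝓝[>] 0) (𝓝 (d / c ^ 2)) := by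
    refine tendsto_div_sq_of_hasDerivAt_one_sub_div (u := fun x => B x - (1 - x))
      (k := fun x => D x / c ^ 2) one_pos
      (hBcont.sub (by fun_prop)) (by simp [hB0]) (fun x hx => div_pos (hD x hx) (by positivity))
      (fun x hx => ?_) hdc
      ((hDd.div_const (c ^ 2)).congr fun x => by ring)
    refine ((hODE x hx).sub ((hasDerivAt_const x 1).sub (hasDerivAt_id x))).congr_deriv ?_
    have := (hD x hx).ne'
    field_simp
    ring
  have hderiv : Tendsto (deriv B) (𝓝[>] 0) (𝓝 (-1)) := by
    have hlim := (hu.div (hDd.div_const (c ^ 2)) hdc.ne').neg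
    rw [div_self hdc.ne'] at hlim
    refine hlim.congr' ?_
    filter_upwards [Ioo_mem_nhdsGT one_pos] with x hx
    have := (hD x hx).ne'
    have := hx.1.ne'
    rw [Pi.div_apply, (hODE x hx).deriv]
    field_simp
    ring
  exact ⟨hderiv, hasDerivWithinAt_Ici_of_tendsto_deriv
    (fun x hx => (hODE x hx).differentiableAt.differentiableWithinAt) hBc
    (Ioo_mem_nhdsGT one_pos) hderiv⟩

/-- Lemma 4.2: for the solution `B` of the singular first-order problem
`Ḃ = c²(1−η−B)/(g(η)h(B)f(η,B))`, `B(0) = 1`, one has `Ḃ(0⁺) = −1`; in particular `B`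
has right derivative `−1` at `0`. -/
theorem statement14
    (f : ℝ → ℝ → ℝ) (g h : ℝ → ℝ) (L1 L2 Mg : ℝ)
    (A : Assumptions f g h L1 L2 Mg)
    (c : ℝ) (hc : 0 < c)
    (B : ℝ → ℝ) (hBcont : ContinuousOn B (Ico 0 1)) (hB0 : B 0 = 1)
    (hODE : ∀ x ∈ Ioo (0:ℝ) 1,
      HasDerivAt B (c ^ 2 * (1 - x - B x) / (g x * h (B x) * f x (B x))) x)
    (hBder : ∀ x ∈ Ioo (0:ℝ) 1, deriv B x ≤ 0)
    (hBbd : ∀ x ∈ Ioo (0:ℝ) 1, 1 - x ≤ B x ∧ B x ≤ 1) :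
    Tendsto (deriv B) (nhdsWithin 0 (Ioi 0)) (𝓝 (-1)) ∧
    HasDerivWithinAt B (-1) (Ici 0) 0 :=
  statement14_general f g h L1 L2 Mg A c hc B hBcont hB0 hODE hBbd
end
end

section
/- Let 0 < c₁ < c₂ and, for i = 1,2, let B_i : [0,1) → ℝ be continuous with B_i(0) = 1, differentiable on (0,1) with Ḃ_i(η) ≤ 0 and 1 − η ≤ B_i(η) ≤ 1 for all η ∈ (0,1), and satisfying Ḃ_i(η) = c_i²·(1 − η − B_i(η))/(g(η)·h(B_i(η))·f(η,B_i(η))) for all η ∈ (0,1). Then B₁(η) > B₂(η) for every η ∈ (0,1). -/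
open MeasureTheory Filter Set Topology

noncomputable section

/-!
Let `v = B₁ - B₂`, so `v(0) = 0`. A solution never touches the line `B = 1 - η`, so at a point
where `B₁ = B₂ = B` the equations give `v̇ = (c₁² - c₂²)(1 - η - B) / (g h f) > 0`: `v` can only
cross zero upwards. It remains to see that `v ≥ 0` just after the singular point `η = 0`, where
both profiles start at `1`. There, on the strip `1 - η ≤ B ≤ 1`, the denominator satisfies
`h(B) f(η, B) = h(1) f(η, 1) (1 + o(1))`, because `f(0, ·) ≡ 0` forces `∂_B f(0, 1) = 0` and
`f(η, 1) ≥ L1 η`. Hence wherever `B₁ ≤ B₂` near `0`, the factor `c₂² / c₁² > 1` wins and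
`v̇ ≥ 0`.
-/

lemma HasDerivAt.eventually_nhdsLT_lt {v : ℝ → ℝ} {d x : ℝ} (hv : HasDerivAt v d x)
    (hd : 0 < d) : ∀ᶠ y in 𝓝[<] x, v y < v x := by
  filter_upwards [nhdsLT_le_nhdsNE x ((hasDerivAt_iff_tendsto_slope.mp hv).eventually
    (eventually_gt_nhds hd)), self_mem_nhdsWithin] with y hslope hyx
  exact (slope_pos_iff_gt hyx).1 hslope

lemma nonneg_of_hasDerivAt_nonneg_of_neg {v v' : ℝ → ℝ} {a b : ℝ}
    (hv : ContinuousOn v (Icc a b)) (ha : 0 ≤ v a)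
    (hv' : ∀ x ∈ Ioo a b, HasDerivAt v (v' x) x)
    (hneg : ∀ x ∈ Ioo a b, v x < 0 → 0 ≤ v' x) : ∀ x ∈ Icc a b, 0 ≤ v x := by
  intro x hx
  by_contra! hvx
  set T := Icc a x ∩ v ⁻¹' Ici 0
  have hT : IsClosed T := (hv.mono (Icc_subset_Icc_right hx.2)).preimage_isClosed_of_isClosed
    isClosed_Icc isClosed_Ici
  have hbdd : BddAbove T := ⟨x, fun y hy => hy.1.2⟩
  -- `z` is the last point of `[a, x]` where `v ≥ 0`; after it `v < 0`, so `v` increases.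
  set z := sSup T
  have hzT : z ∈ T := hT.csSup_mem ⟨a, left_mem_Icc.2 hx.1, ha⟩ hbdd
  have hneg_after : ∀ y ∈ Ioc z x, v y < 0 := fun y hy => by
    by_contra! hy0
    exact (le_csSup hbdd ⟨⟨hzT.1.1.trans hy.1.le, hy.2⟩, hy0⟩).not_gt hy.1
  have hmono : MonotoneOn v (Icc z x) := by
    have hint : ∀ y ∈ interior (Icc z x), y ∈ Ioo a b ∧ v y < 0 := by
      rw [interior_Icc]
      exact fun y hy => ⟨⟨hzT.1.1.trans_lt hy.1, hy.2.trans_le hx.2⟩, hneg_after y ⟨hy.1, hy.2.le⟩⟩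
    exact monotoneOn_of_hasDerivWithinAt_nonneg (convex_Icc z x)
      (hv.mono (Icc_subset_Icc hzT.1.1 hx.2)) (fun y hy => (hv' y (hint y hy).1).hasDerivWithinAt)
      fun y hy => hneg y (hint y hy).1 (hint y hy).2
  have hvz : 0 ≤ v z := hzT.2
  linarith [hmono (left_mem_Icc.2 hzT.1.2) (right_mem_Icc.2 hzT.1.2) hzT.1.2]

/-- `B₁ ≥ B₂` is propagated from `a` by the one-sided condition near `a`, and is strict
because `B₁ - B₂` can only cross zero upwards. -/
theorem lt_of_hasDerivAt_of_lt_at_eq {B₁ B₂ F₁ F₂ : ℝ → ℝ} {a b : ℝ} (hab : a < b)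
    (hB₁ : ContinuousOn B₁ (Ico a b)) (hB₂ : ContinuousOn B₂ (Ico a b)) (ha : B₂ a ≤ B₁ a)
    (hF₁ : ∀ x ∈ Ioo a b, HasDerivAt B₁ (F₁ x) x) (hF₂ : ∀ x ∈ Ioo a b, HasDerivAt B₂ (F₂ x) x)
    (hnear : ∀ᶠ x in 𝓝[>] a, B₁ x < B₂ x → F₂ x ≤ F₁ x)
    (heq : ∀ x ∈ Ioo a b, B₁ x = B₂ x → F₂ x < F₁ x) : ∀ x ∈ Ioo a b, B₂ x < B₁ x := by
  obtain ⟨m, ham, hmb⟩ := exists_between hab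
  obtain ⟨c, ⟨hac, hcm⟩, hc⟩ := (mem_nhdsGT_iff_exists_mem_Ioc_Ioo_subset ham).1 hnear
  have hcb : c < b := hcm.trans_lt hmb
  have hac_sub : Ioo a c ⊆ Ioo a b := Ioo_subset_Ioo_right hcb.le
  have hle_near : ∀ x ∈ Icc a c, 0 ≤ B₁ x - B₂ x :=
    nonneg_of_hasDerivAt_nonneg_of_neg ((hB₁.sub hB₂).mono (Icc_subset_Ico_right hcb))
      (sub_nonneg.2 ha) (fun x hx => (hF₁ x (hac_sub hx)).sub (hF₂ x (hac_sub hx)))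
      (fun x hx hneg => sub_nonneg.2 (hc hx (sub_neg.1 hneg)))
  have hle : ∀ x ∈ Ioo a b, B₂ x ≤ B₁ x := by
    intro x hx
    rcases le_total x c with hxc | hcx
    · exact sub_nonneg.1 (hle_near x ⟨hx.1.le, hxc⟩)
    have hsub : Icc c x ⊆ Ico a b := Icc_subset_Ico hac.le hx.2
    have hmem : ∀ y ∈ Ico c x, y ∈ Ioo a b := fun y hy => ⟨hac.trans_le hy.1, hy.2.trans hx.2⟩
    exact image_le_of_deriv_right_lt_deriv_boundary' (hB₂.mono hsub)
      (fun y hy => (hF₂ y (hmem y hy)).hasDerivWithinAt)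
      (sub_nonneg.1 (hle_near c (right_mem_Icc.2 hac.le))) (hB₁.mono hsub)
      (fun y hy => (hF₁ y (hmem y hy)).hasDerivWithinAt)
      (fun y hy hy_eq => heq y (hmem y hy) hy_eq.symm) (right_mem_Icc.2 hcx)
  intro x hx
  refine (hle x hx).lt_of_ne fun hx_eq => ?_
  have hcross := ((hF₁ x hx).sub (hF₂ x hx)).eventually_nhdsLT_lt
    (sub_pos.2 (heq x hx hx_eq.symm))
  obtain ⟨y, hy_lt, hy⟩ := (hcross.and (Ioo_mem_nhdsLT hx.1)).exists
  have := hle y ⟨hy.1, hy.2.trans hx.2⟩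
  simp only [Pi.sub_apply] at hy_lt
  linarith

lemma HasFDerivWithinAt.apply_zero_one_eq_zero {F : ℝ × ℝ → ℝ} {L : ℝ × ℝ →L[ℝ] ℝ}
    (hF : HasFDerivWithinAt F L (Icc 0 1 ×ˢ Icc 0 1) (0, 1))
    (h0 : ∀ r ∈ Icc (0 : ℝ) 1, F (0, r) = 0) : L (0, 1) = 0 := by
  have hline : HasDerivWithinAt (fun t : ℝ => ((0 : ℝ), t)) ((0 : ℝ), (1 : ℝ)) (Icc 0 1) 1 :=
    ((hasDerivAt_const 1 (0 : ℝ)).prodMk (hasDerivAt_id 1)).hasDerivWithinAt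
  have hL : HasDerivWithinAt (fun t => F (0, t)) (L (0, 1)) (Icc 0 1) 1 :=
    hF.comp_hasDerivWithinAt 1 hline fun t ht => ⟨left_mem_Icc.2 zero_le_one, ht⟩
  have h0' : HasDerivWithinAt (fun t => F (0, t)) 0 (Icc 0 1) 1 :=
    (hasDerivWithinAt_const 1 _ 0).congr h0 (h0 1 (right_mem_Icc.2 zero_le_one))
  exact (uniqueDiffOn_Icc zero_lt_one 1 (right_mem_Icc.2 zero_le_one)).eq_deriv _ hL h0'

lemma HasFDerivWithinAt.eventually_abs_sub_le {F : ℝ × ℝ → ℝ} {L : ℝ × ℝ →L[ℝ] ℝ}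
    (hF : HasFDerivWithinAt F L (Icc 0 1 ×ˢ Icc 0 1) (0, 1)) (hL : L (0, 1) = 0)
    {ε : ℝ} (hε : 0 < ε) :
    ∀ᶠ x in 𝓝[>] 0, ∀ r ∈ Icc (1 - x) 1, |F (x, r) - F (x, 1)| ≤ ε * x := by
  set E : ℝ × ℝ → ℝ := fun p => F p - F (0, 1) - L (p - (0, 1))
  obtain ⟨ρ, hρ, hball⟩ := Metric.mem_nhdsWithin_iff.1 (hF.isLittleO.def (half_pos hε))
  have hE : ∀ x ∈ Ioo 0 (min ρ 1), ∀ r ∈ Icc (1 - x) 1, |E (x, r)| ≤ ε / 2 * x := by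
    intro x hx r hr
    have hx1 : x < 1 := hx.2.trans_le (min_le_right _ _)
    have hnorm : ‖((x, r) : ℝ × ℝ) - (0, 1)‖ = x := by
      rw [Prod.mk_sub_mk, Prod.norm_mk, sub_zero, Real.norm_of_nonneg hx.1.le,
        Real.norm_of_nonpos (by linarith [hr.2])]
      exact max_eq_left (by linarith [hr.1])
    have hmem : ((x, r) : ℝ × ℝ) ∈ Metric.ball (0, 1) ρ ∩ (Icc 0 1 ×ˢ Icc 0 1) :=
      ⟨by rw [Metric.mem_ball, dist_eq_norm, hnorm]; exact hx.2.trans_le (min_le_left _ _),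
        ⟨hx.1.le, hx1.le⟩, by linarith [hr.1], hr.2⟩
    have hsmall : ‖E (x, r)‖ ≤ ε / 2 * ‖((x, r) : ℝ × ℝ) - (0, 1)‖ := hball hmem
    rwa [hnorm, Real.norm_eq_abs] at hsmall
  filter_upwards [Ioo_mem_nhdsGT (lt_min hρ one_pos)] with x hx r hr
  have hsplit : F (x, r) - F (x, 1) = E (x, r) - E (x, 1) := by
    have : L ((x, r) - (0, 1)) - L ((x, 1) - (0, 1)) = (r - 1) * L (0, 1) := by
      rw [← L.map_sub, ← smul_eq_mul, ← L.map_smul]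
      congr 1
      simp
    simp only [E]
    linear_combination this + (r - 1) * hL
  calc |F (x, r) - F (x, 1)| = |E (x, r) - E (x, 1)| := by rw [hsplit]
    _ ≤ |E (x, r)| + |E (x, 1)| := abs_sub _ _
    _ ≤ ε / 2 * x + ε / 2 * x :=
      add_le_add (hE x hx r hr) (hE x hx 1 ⟨by linarith [hx.1], le_rfl⟩)
    _ = ε * x := by ring

lemma ContinuousWithinAt.eventually_abs_sub_le_Icc_one_sub {φ : ℝ → ℝ}
    (hφ : ContinuousWithinAt φ (Icc 0 1) 1) {ε : ℝ} (hε : 0 < ε) :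
    ∀ᶠ x in 𝓝[>] 0, ∀ r ∈ Icc (1 - x) 1, |φ r - φ 1| ≤ ε := by
  obtain ⟨δ, hδ, hφδ⟩ := Metric.continuousWithinAt_iff.1 hφ ε hε
  filter_upwards [Ioo_mem_nhdsGT (lt_min hδ one_pos)] with x hx r hr
  have hx1 : x < 1 := hx.2.trans_le (min_le_right _ _)
  have hxδ : x < δ := hx.2.trans_le (min_le_left _ _)
  refine (hφδ ⟨by linarith [hr.1], hr.2⟩ ?_).le
  rw [Real.dist_eq, abs_of_nonpos (by linarith [hr.2])]
  linarith [hr.1]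

lemma sq_mul_mul_le_of_abs_sub_le {c₁ c₂ s p q p₁ q₁ p₂ q₂ : ℝ}
    (hcs : c₁ * (1 + s) = c₂ * (1 - s)) (hs : s ≤ 1) (hp : 0 ≤ p) (hq : 0 ≤ q)
    (hp₁ : |p₁ - p| ≤ s * p) (hq₁ : |q₁ - q| ≤ s * q)
    (hp₂ : |p₂ - p| ≤ s * p) (hq₂ : |q₂ - q| ≤ s * q) :
    c₁ ^ 2 * (p₂ * q₂) ≤ c₂ ^ 2 * (p₁ * q₁) := by
  obtain ⟨hp₁l, -⟩ := abs_le.1 hp₁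
  obtain ⟨hq₁l, -⟩ := abs_le.1 hq₁
  obtain ⟨hp₂l, hp₂u⟩ := abs_le.1 hp₂
  obtain ⟨hq₂l, hq₂u⟩ := abs_le.1 hq₂
  have hs' : 0 ≤ 1 - s := sub_nonneg.2 hs
  calc c₁ ^ 2 * (p₂ * q₂) ≤ c₁ ^ 2 * (((1 + s) * p) * ((1 + s) * q)) := by
        gcongr
        all_goals nlinarith
    _ = (c₂ * (1 - s)) ^ 2 * (p * q) := by rw [← hcs]; ring
    _ = c₂ ^ 2 * (((1 - s) * p) * ((1 - s) * q)) := by ring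
    _ ≤ c₂ ^ 2 * (p₁ * q₁) := by
        gcongr c₂ ^ 2 * ?_
        exact mul_le_mul (by linarith) (by linarith) (mul_nonneg hs' hq)
          (by nlinarith [mul_nonneg hs' hp])

lemma div_le_div_of_mul_le_mul_of_nonpos {a₁ a₂ u₁ u₂ D₁ D₂ : ℝ} (hD₁ : 0 < D₁) (hD₂ : 0 < D₂)
    (ha₂ : 0 ≤ a₂) (hu : u₂ ≤ u₁) (hu₁ : u₁ ≤ 0) (hD : a₁ * D₂ ≤ a₂ * D₁) :
    a₂ * u₂ / D₂ ≤ a₁ * u₁ / D₁ := by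
  rw [div_le_div_iff₀ hD₂ hD₁]
  nlinarith [mul_le_mul_of_nonpos_left hD hu₁,
    mul_le_mul_of_nonneg_right hu (mul_nonneg ha₂ hD₁.le)]

def waveSlope (f : ℝ → ℝ → ℝ) (g h : ℝ → ℝ) (c x r : ℝ) : ℝ :=
  c ^ 2 * (1 - x - r) / (g x * h r * f x r)

/-- At a point where `B` touched the line `B = 1 - η` its slope would be `0`, not `-1`. -/
lemma one_sub_lt_of_hasDerivAt_waveSlope {f : ℝ → ℝ → ℝ} {g h B : ℝ → ℝ} {c : ℝ}
    (hB : ∀ x ∈ Ioo (0 : ℝ) 1, HasDerivAt B (waveSlope f g h c x (B x)) x)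
    (hbd : ∀ x ∈ Ioo (0 : ℝ) 1, 1 - x ≤ B x) : ∀ x ∈ Ioo (0 : ℝ) 1, 1 - x < B x := by
  intro x hx
  refine (hbd x hx).lt_of_ne fun heq => ?_
  have hmin : IsLocalMin (fun y => B y - (1 - y)) x := by
    filter_upwards [Ioo_mem_nhds hx.1 hx.2] with y hy
    linarith [hbd y hy]
  have := hmin.hasDerivAt_eq_zero ((hB x hx).sub ((hasDerivAt_id x).const_sub 1))
  simp [waveSlope, ← heq] at this

namespace Assumptions

variable {f : ℝ → ℝ → ℝ} {g h : ℝ → ℝ} {L1 L2 Mg : ℝ}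

lemma g_pos_s15 (A : Assumptions f g h L1 L2 Mg) {x : ℝ} (hx : x ∈ Ioc (0 : ℝ) 1) : 0 < g x :=
  (A.g_nonneg x (Ioc_subset_Icc_self hx)).lt_of_ne fun h0 =>
    hx.1.ne' ((A.g_zero_iff x (Ioc_subset_Icc_self hx)).1 h0.symm)

lemma h_pos_s15 (A : Assumptions f g h L1 L2 Mg) {r : ℝ} (hr : r ∈ Ioc (0 : ℝ) 1) : 0 < h r :=
  (A.h_nonneg r (Ioc_subset_Icc_self hr)).lt_of_ne fun h0 =>
    hr.1.ne' ((A.h_zero_iff r (Ioc_subset_Icc_self hr)).1 h0.symm)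

lemma f_pos_s15 (A : Assumptions f g h L1 L2 Mg) {x r : ℝ} (hx : x ∈ Ioc (0 : ℝ) 1)
    (hr : r ∈ Ioc (0 : ℝ) 1) : 0 < f x r :=
  (A.f_nonneg x (Ioc_subset_Icc_self hx) r (Ioc_subset_Icc_self hr)).lt_of_ne fun h0 =>
    ((A.f_zero_iff x (Ioc_subset_Icc_self hx) r (Ioc_subset_Icc_self hr)).1 h0.symm).elim
      hx.1.ne' hr.1.ne'

lemma denom_pos (A : Assumptions f g h L1 L2 Mg) {x r : ℝ} (hx : x ∈ Ioc (0 : ℝ) 1)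
    (hr : r ∈ Ioc (0 : ℝ) 1) : 0 < g x * h r * f x r :=
  mul_pos (mul_pos (A.g_pos_s15 hx) (A.h_pos_s15 hr)) (A.f_pos_s15 hx hr)

lemma mul_le_f_one (A : Assumptions f g h L1 L2 Mg) {x : ℝ} (hx : x ∈ Ioo (0 : ℝ) 1) :
    L1 * x ≤ f x 1 := by
  have hcont : ContinuousOn (fun r => f x r) (Icc 0 1) :=
    A.f_C1.continuousOn.comp (continuousOn_const.prodMk continuousOn_id)
      fun r hr => ⟨⟨hx.1.le, hx.2.le⟩, hr⟩
  have hlim : Tendsto (fun r => f x r) (𝓝[<] 1) (𝓝 (f x 1)) :=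
    ((hcont 1 (right_mem_Icc.2 zero_le_one)).mono_of_mem_nhdsWithin
      (Icc_mem_nhdsLT zero_lt_one)).tendsto
  have hlin : Tendsto (fun r => L1 * (x * r)) (𝓝[<] 1) (𝓝 (L1 * x)) := by
    have hcont : Continuous fun r : ℝ => L1 * (x * r) := by fun_prop
    simpa using (hcont.tendsto 1).mono_left nhdsWithin_le_nhds
  exact le_of_tendsto_of_tendsto hlin hlim
    (eventually_of_mem (Ioo_mem_nhdsLT zero_lt_one) fun r hr => A.f_lower x hx r hr)

lemma eventually_abs_sub_f_le (A : Assumptions f g h L1 L2 Mg) {ε : ℝ} (hε : 0 < ε) :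
    ∀ᶠ x in 𝓝[>] 0, ∀ r ∈ Icc (1 - x) 1, |f x r - f x 1| ≤ ε * x := by
  have hcorner : ((0 : ℝ), (1 : ℝ)) ∈ Icc (0 : ℝ) 1 ×ˢ Icc (0 : ℝ) 1 :=
    ⟨left_mem_Icc.2 zero_le_one, right_mem_Icc.2 zero_le_one⟩
  have hF := (A.f_C1.differentiableOn one_ne_zero _ hcorner).hasFDerivWithinAt
  exact hF.eventually_abs_sub_le (hF.apply_zero_one_eq_zero fun r hr =>
    (A.f_zero_iff 0 (left_mem_Icc.2 zero_le_one) r hr).2 (Or.inl rfl)) hε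

/-- `f(η, ·)` is flat at `(0, 1)` to first order while `f(η, 1) ≥ L1 η`, so `h(r) f(η, r)` is
nearly constant on the strip `1 - η ≤ r ≤ 1`. -/
lemma eventually_sq_mul_le (A : Assumptions f g h L1 L2 Mg) {c₁ c₂ : ℝ} (hc₁ : 0 < c₁)
    (hc₁₂ : c₁ < c₂) :
    ∀ᶠ x in 𝓝[>] 0, ∀ r₁ ∈ Icc (1 - x) 1, ∀ r₂ ∈ Icc (1 - x) 1,
      c₁ ^ 2 * (h r₂ * f x r₂) ≤ c₂ ^ 2 * (h r₁ * f x r₁) := by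
  have hsum : 0 < c₁ + c₂ := by linarith
  set s := (c₂ - c₁) / (c₁ + c₂)
  have hs : 0 < s := div_pos (by linarith) hsum
  have hs1 : s ≤ 1 := (div_le_one hsum).2 (by linarith)
  have hcs : c₁ * (1 + s) = c₂ * (1 - s) := by
    simp only [s]
    field_simp
    ring
  have hh1 : 0 < h 1 := A.h_pos_s15 (right_mem_Ioc.2 zero_lt_one)
  filter_upwards [Ioo_mem_nhdsGT zero_lt_one,
    (A.h_C1.continuousOn 1 (right_mem_Icc.2 zero_le_one)).eventually_abs_sub_le_Icc_one_sub
      (mul_pos hs hh1),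
    A.eventually_abs_sub_f_le (mul_pos hs A.L1_pos)] with x hx hh hf r₁ hr₁ r₂ hr₂
  have hf' : ∀ r ∈ Icc (1 - x) 1, |f x r - f x 1| ≤ s * f x 1 := fun r hr =>
    calc |f x r - f x 1| ≤ s * L1 * x := hf r hr
      _ ≤ s * f x 1 := by rw [mul_assoc]; exact mul_le_mul_of_nonneg_left (A.mul_le_f_one hx) hs.le
  exact sq_mul_mul_le_of_abs_sub_le hcs hs1 hh1.le
    (A.f_nonneg x ⟨hx.1.le, hx.2.le⟩ 1 (right_mem_Icc.2 zero_le_one))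
    (hh r₁ hr₁) (hf' r₁ hr₁) (hh r₂ hr₂) (hf' r₂ hr₂)

lemma eventually_waveSlope_le (A : Assumptions f g h L1 L2 Mg) {c₁ c₂ : ℝ} (hc₁ : 0 < c₁)
    (hc₁₂ : c₁ < c₂) :
    ∀ᶠ x in 𝓝[>] 0, ∀ r₁ ∈ Icc (1 - x) 1, ∀ r₂ ∈ Icc (1 - x) 1, r₁ ≤ r₂ →
      waveSlope f g h c₂ x r₂ ≤ waveSlope f g h c₁ x r₁ := by
  filter_upwards [Ioo_mem_nhdsGT zero_lt_one, A.eventually_sq_mul_le hc₁ hc₁₂]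
    with x hx hkey r₁ hr₁ r₂ hr₂ hr
  have hxI : x ∈ Ioc (0 : ℝ) 1 := ⟨hx.1, hx.2.le⟩
  have hmem : ∀ r ∈ Icc (1 - x) 1, r ∈ Ioc (0 : ℝ) 1 := fun r hr => ⟨by linarith [hr.1, hx.2], hr.2⟩
  refine div_le_div_of_mul_le_mul_of_nonpos (A.denom_pos hxI (hmem r₁ hr₁))
    (A.denom_pos hxI (hmem r₂ hr₂)) (sq_nonneg c₂) (by linarith) (by linarith [hr₁.1]) ?_
  calc c₁ ^ 2 * (g x * h r₂ * f x r₂) = g x * (c₁ ^ 2 * (h r₂ * f x r₂)) := by ring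
    _ ≤ g x * (c₂ ^ 2 * (h r₁ * f x r₁)) :=
        mul_le_mul_of_nonneg_left (hkey r₁ hr₁ r₂ hr₂) (A.g_pos_s15 hxI).le
    _ = c₂ ^ 2 * (g x * h r₁ * f x r₁) := by ring

lemma waveSlope_lt_waveSlope (A : Assumptions f g h L1 L2 Mg) {c₁ c₂ x r : ℝ} (hc₁ : 0 < c₁)
    (hc₁₂ : c₁ < c₂) (hx : x ∈ Ioo (0 : ℝ) 1) (hr : 1 - x < r) (hr1 : r ≤ 1) :
    waveSlope f g h c₂ x r < waveSlope f g h c₁ x r := by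
  refine div_lt_div_of_pos_right ?_ (A.denom_pos ⟨hx.1, hx.2.le⟩ ⟨by linarith [hx.2], hr1⟩)
  exact mul_lt_mul_of_neg_right (pow_lt_pow_left₀ hc₁₂ hc₁.le two_ne_zero) (by linarith)

end Assumptions

theorem statement15_general
    (f : ℝ → ℝ → ℝ) (g h : ℝ → ℝ) (L1 L2 Mg : ℝ)
    (A : Assumptions f g h L1 L2 Mg)
    (c₁ c₂ : ℝ) (hc₁ : 0 < c₁) (hc₁₂ : c₁ < c₂)
    (B₁ B₂ : ℝ → ℝ)
    (hB₁cont : ContinuousOn B₁ (Ico 0 1)) (hB₁0 : B₁ 0 = 1)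
    (hODE₁ : ∀ x ∈ Ioo (0:ℝ) 1,
      HasDerivAt B₁ (c₁ ^ 2 * (1 - x - B₁ x) / (g x * h (B₁ x) * f x (B₁ x))) x)
    (hB₁bd : ∀ x ∈ Ioo (0:ℝ) 1, 1 - x ≤ B₁ x ∧ B₁ x ≤ 1)
    (hB₂cont : ContinuousOn B₂ (Ico 0 1)) (hB₂0 : B₂ 0 = 1)
    (hODE₂ : ∀ x ∈ Ioo (0:ℝ) 1,
      HasDerivAt B₂ (c₂ ^ 2 * (1 - x - B₂ x) / (g x * h (B₂ x) * f x (B₂ x))) x)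
    (hB₂bd : ∀ x ∈ Ioo (0:ℝ) 1, 1 - x ≤ B₂ x ∧ B₂ x ≤ 1) :
    ∀ x ∈ Ioo (0:ℝ) 1, B₂ x < B₁ x := by
  have hbarrier₁ := one_sub_lt_of_hasDerivAt_waveSlope hODE₁ fun x hx => (hB₁bd x hx).1
  refine lt_of_hasDerivAt_of_lt_at_eq zero_lt_one hB₁cont hB₂cont (hB₂0.trans hB₁0.symm).le
    hODE₁ hODE₂ ?_ fun x hx hx_eq => ?_
  · filter_upwards [A.eventually_waveSlope_le hc₁ hc₁₂, Ioo_mem_nhdsGT zero_lt_one]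
      with x hslope hx hlt
    exact hslope _ (hB₁bd x hx) _ (hB₂bd x hx) hlt.le
  · rw [← hx_eq]
    exact A.waveSlope_lt_waveSlope hc₁ hc₁₂ hx (hbarrier₁ x hx) (hB₁bd x hx).2

/-- Lemma 4.4 (monotonicity in the speed): if `0 < c₁ < c₂` and `B₁`, `B₂` solve the singular
first-order problem with speeds `c₁`, `c₂`, then `B₁ > B₂` on `(0,1)`. -/
theorem statement15
    (f : ℝ → ℝ → ℝ) (g h : ℝ → ℝ) (L1 L2 Mg : ℝ)
    (A : Assumptions f g h L1 L2 Mg)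
    (c₁ c₂ : ℝ) (hc₁ : 0 < c₁) (hc₁₂ : c₁ < c₂)
    (B₁ B₂ : ℝ → ℝ)
    (hB₁cont : ContinuousOn B₁ (Ico 0 1)) (hB₁0 : B₁ 0 = 1)
    (hODE₁ : ∀ x ∈ Ioo (0:ℝ) 1,
      HasDerivAt B₁ (c₁ ^ 2 * (1 - x - B₁ x) / (g x * h (B₁ x) * f x (B₁ x))) x)
    (hB₁der : ∀ x ∈ Ioo (0:ℝ) 1, deriv B₁ x ≤ 0)
    (hB₁bd : ∀ x ∈ Ioo (0:ℝ) 1, 1 - x ≤ B₁ x ∧ B₁ x ≤ 1)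
    (hB₂cont : ContinuousOn B₂ (Ico 0 1)) (hB₂0 : B₂ 0 = 1)
    (hODE₂ : ∀ x ∈ Ioo (0:ℝ) 1,
      HasDerivAt B₂ (c₂ ^ 2 * (1 - x - B₂ x) / (g x * h (B₂ x) * f x (B₂ x))) x)
    (hB₂der : ∀ x ∈ Ioo (0:ℝ) 1, deriv B₂ x ≤ 0)
    (hB₂bd : ∀ x ∈ Ioo (0:ℝ) 1, 1 - x ≤ B₂ x ∧ B₂ x ≤ 1) :
    ∀ x ∈ Ioo (0:ℝ) 1, B₂ x < B₁ x :=
  statement15_general f g h L1 L2 Mg A c₁ c₂ hc₁ hc₁₂ B₁ B₂ hB₁cont hB₁0 hODE₁ hB₁bd hB₂cont hB₂0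
    hODE₂ hB₂bd
end
end
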